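/- The following are equivalent: (1) E satisfies condition (K), i.e. no vertex has exactly one loop based at it; (2) for every subset F of X that is closed in the subspace topology of X and invariant under tail equivalence, the set of points of F with trivial isotropy is dense in F. -/

import Mathlib

namespace GraphCstar

/-- A directed graph: vertices, edges, source and range maps. -/
structure Graph where
  V : Type
  Ed : Type
  src : Ed → V
  rng : Ed → V

variable (G : Graph)

/-- Validity of a list of edges as a path starting at vertex `v`. -/
def Valid : G.V → List G.Ed → Prop
  | _, [] => True
  | v, e :: l => G.src e = v ∧ Valid (G.rng e) l

/-- Terminal vertex of a list of edges starting at `v`. -/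
def rngTo : G.V → List G.Ed → G.V
  | v, [] => v
  | _, e :: l => rngTo (G.rng e) l

theorem valid_append (l₁ l₂ : List G.Ed) (v : G.V) :
    Valid G v (l₁ ++ l₂) ↔ Valid G v l₁ ∧ Valid G (rngTo G v l₁) l₂ := by
  induction l₁ generalizing v with
  | nil => simp [Valid, rngTo]
  | cons e l ih => simp [Valid, rngTo, ih, and_assoc]

theorem rngTo_append (l₁ l₂ : List G.Ed) (v : G.V) :
    rngTo G v (l₁ ++ l₂) = rngTo G (rngTo G v l₁) l₂ := by
  induction l₁ generalizing v with
  | nil => rfl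
  | cons e l ih => simp [rngTo, ih]

theorem valid_drop {v : G.V} {l : List G.Ed} (n : ℕ) (h : Valid G v l) :
    Valid G (rngTo G v (l.take n)) (l.drop n) := by
  have h' : Valid G v (l.take n ++ l.drop n) := by
    rw [List.take_append_drop]; exact h
  exact ((valid_append G _ _ _).mp h').2

/-- A finite path in the graph `G`; vertices are the paths of length `0`. -/
structure FinPath where
  start : G.V
  edges : List G.Ed
  valid : Valid G start edges

namespace FinPath

variable {G}

/-- The terminal vertex (range) of a finite path. -/
def rngF (α : FinPath G) : G.V := rngTo G α.start α.edges

/-- The length of a finite path. -/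
def len (α : FinPath G) : ℕ := α.edges.length

/-- The finite path of length `0` at the vertex `v`. -/
def vp (v : G.V) : FinPath G := ⟨v, [], trivial⟩

/-- The finite path consisting of the single edge `e`. -/
def ep (e : G.Ed) : FinPath G := ⟨G.src e, [e], ⟨rfl, trivial⟩⟩

/-- Concatenation of finite paths. -/
def concat (α β : FinPath G) (h : β.start = α.rngF) : FinPath G :=
  ⟨α.start, α.edges ++ β.edges,
    (valid_append G _ _ _).mpr
      ⟨α.valid, by
        show Valid G α.rngF β.edges
        rw [← h]; exact β.valid⟩⟩

theorem rngF_concat (α β : FinPath G) (h : β.start = α.rngF) :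
    (α.concat β h).rngF = β.rngF := by
  show rngTo G α.start (α.edges ++ β.edges) = _
  rw [rngTo_append]
  show rngTo G α.rngF β.edges = _
  rw [← h]; rfl

end FinPath

/-- `α` is an initial segment of `β`. -/
def IsPref (α β : FinPath G) : Prop := α.start = β.start ∧ α.edges <+: β.edges

/-- The "remainder" path: if `α` is an initial segment of `β`, the path `μ` with
`β = αμ` (for other inputs the value is junk). -/
def diff (α β : FinPath G) : FinPath G :=
  ⟨rngTo G β.start (β.edges.take α.edges.length),
    β.edges.drop α.edges.length, valid_drop G _ β.valid⟩

open Classical in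
/-- Totalized concatenation of finite paths (junk value when endpoints do not match). -/
noncomputable def catP (α β : FinPath G) : FinPath G :=
  if h : β.start = α.rngF then α.concat β h else α

open Classical in
/-- The product on `T = {(α,β) ∈ Y × Y : r(α) = r(β)} ∪ {z}`, with `z` encoded as `none`. -/
noncomputable def mulT :
    Option (FinPath G × FinPath G) → Option (FinPath G × FinPath G) →
      Option (FinPath G × FinPath G)
  | none, _ => none
  | _, none => none
  | some (α₁, β₁), some (α₂, β₂) =>
    if IsPref G β₁ α₂ then some (catP G α₁ (diff G β₁ α₂), β₂)
    else if IsPref G α₂ β₁ then some (α₁, catP G β₂ (diff G α₂ β₁))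
    else none

/-- The involution on `T`. -/
def starT :
    Option (FinPath G × FinPath G) → Option (FinPath G × FinPath G)
  | none => none
  | some (α, β) => some (β, α)

/-- The subset of `Option (FinPath G × FinPath G)` corresponding to
`T = {(α,β) : r(α) = r(β)} ∪ {z}`. -/
def TsetT : Set (Option (FinPath G × FinPath G)) :=
  {t | ∀ α β : FinPath G, t = some (α, β) → α.rngF = β.rngF}

/-- An infinite path in the graph `G`. -/
structure InfPath where
  seq : ℕ → G.Ed
  valid : ∀ i, G.src (seq (i + 1)) = G.rng (seq i)

/-- The initial vertex of an infinite path. -/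
def InfPath.start {G : Graph} (z : InfPath G) : G.V := G.src (z.seq 0)

/-- Prepending an edge to an infinite path. -/
def consInf (e : G.Ed) (z : InfPath G) (h : z.start = G.rng e) : InfPath G where
  seq := fun n =>
    match n with
    | 0 => e
    | m + 1 => z.seq m
  valid := fun i =>
    match i with
    | 0 => h
    | m + 1 => z.valid m

/-- Prepending a finite edge list to an infinite path (with the starting vertex recorded). -/
def appendInfAux :
    (l : List G.Ed) → (v : G.V) → Valid G v l → (z : InfPath G) →
      z.start = rngTo G v l → {w : InfPath G // w.start = v}
  | [], _, _, z, h => ⟨z, h⟩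
  | e :: l, v, hv, z, h =>
    let w := appendInfAux l (G.rng e) hv.2 z h
    ⟨consInf G e w.1 w.2, hv.1⟩

/-- Concatenation of a finite path with an infinite path. -/
def FinPath.concatInf {G : Graph} (α : FinPath G) (z : InfPath G)
    (h : z.start = α.rngF) : InfPath G :=
  (appendInfAux G α.edges α.start α.valid z h).1

/-- The path space `Y ∪ Z` of all finite and infinite paths. -/
def PathSp := FinPath G ⊕ InfPath G

/-- The initial vertex of a (finite or infinite) path. -/
def startOf : PathSp G → G.V
  | .inl α => α.start
  | .inr z => z.start

/-- The length of a path, in `ℕ∞`. -/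
def lenOf : PathSp G → ℕ∞
  | .inl α => (α.edges.length : ℕ∞)
  | .inr _ => ⊤

/-- The `i`-th edge (0-indexed) of a path, if it exists. -/
def nthEdge : PathSp G → ℕ → Option G.Ed
  | .inl α, i => α.edges[i]?
  | .inr z, i => some (z.seq i)

/-- `x = αγ` for some (finite or infinite, possibly length `0`) path `γ`;
that is, `α` is an initial segment of `x`, i.e. `x ∈ D_α`. -/
def Ext (α : FinPath G) (x : PathSp G) : Prop :=
  (∃ (β : FinPath G) (h : β.start = α.rngF), x = .inl (α.concat β h)) ∨
  (∃ (w : InfPath G) (h : w.start = α.rngF), x = .inr (α.concatInf w h))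

/-- The basic set `D_α ⊆ Y ∪ Z`. -/
def Dset (α : FinPath G) : Set (PathSp G) := {x | Ext G α x}

/-- The topology on the path space, generated by the sets `D_α` and their complements. -/
def pathTop : TopologicalSpace (PathSp G) :=
  .generateFrom (Set.range (Dset G) ∪ Set.range fun α => (Dset G α)ᶜ)

/-- The vertex `v` emits infinitely many edges. -/
def Vinf (v : G.V) : Prop := {e | G.src e = v}.Infinite

/-- Membership in `X = Y_∞ ∪ Z`. -/
def memX : PathSp G → Prop
  | .inl α => Vinf G α.rngF
  | .inr _ => True

/-- The set `X = Y_∞ ∪ Z`. -/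
def Xset : Set (PathSp G) := {x | memX G x}

/-- Tail equivalence of paths: `x = αγ` and `y = βγ` for finite paths `α, β`
and a common (finite or infinite) path `γ`. -/
def TailEq (x y : PathSp G) : Prop :=
  (∃ (α β γ : FinPath G) (h₁ : γ.start = α.rngF) (h₂ : γ.start = β.rngF),
      x = .inl (α.concat γ h₁) ∧ y = .inl (β.concat γ h₂)) ∨
  (∃ (α β : FinPath G) (w : InfPath G) (h₁ : w.start = α.rngF)
      (h₂ : w.start = β.rngF),
      x = .inr (α.concatInf w h₁) ∧ y = .inr (β.concatInf w h₂))

/-- A subset of the path space is invariant (a union of tail-equivalence classes). -/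
def InvariantS (F : Set (PathSp G)) : Prop :=
  ∀ x ∈ F, ∀ y, TailEq G x y → y ∈ F

/-- Membership `(x, k, y) ∈ G` for the path groupoid: `x = αγ`, `y = βγ` and
`k = l(α) - l(β)`. -/
def InG (x : PathSp G) (k : ℤ) (y : PathSp G) : Prop :=
  (∃ (α β γ : FinPath G) (h₁ : γ.start = α.rngF) (h₂ : γ.start = β.rngF),
      x = .inl (α.concat γ h₁) ∧ y = .inl (β.concat γ h₂) ∧
        k = (α.len : ℤ) - (β.len : ℤ)) ∨
  (∃ (α β : FinPath G) (w : InfPath G) (h₁ : w.start = α.rngF)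
      (h₂ : w.start = β.rngF),
      x = .inr (α.concatInf w h₁) ∧ y = .inr (β.concatInf w h₂) ∧
        k = (α.len : ℤ) - (β.len : ℤ))

/-- There is a finite path from `u` to `w`. -/
def Reach (u w : G.V) : Prop := ∃ β : FinPath G, β.start = u ∧ β.rngF = w

/-- A loop based at the vertex `v`. -/
def LoopAt (v : G.V) (α : FinPath G) : Prop :=
  α.edges ≠ [] ∧ α.start = v ∧ α.rngF = v ∧
    ∀ i e, i + 1 < α.edges.length → α.edges[i]? = some e → G.rng e ≠ v

/-- Condition (K): no vertex has exactly one loop based at it. -/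
def CondK : Prop := ¬ ∃ v : G.V, ∃! α : FinPath G, LoopAt G v α

/-- A point of the path space has trivial isotropy if whenever `x = αγ = βγ`
then `l(α) = l(β)`. -/
def TrivIso (x : PathSp G) : Prop :=
  ∀ α β : FinPath G,
    ((∃ (γ : FinPath G) (h₁ : γ.start = α.rngF) (h₂ : γ.start = β.rngF),
        x = .inl (α.concat γ h₁) ∧ x = .inl (β.concat γ h₂)) ∨
     (∃ (w : InfPath G) (h₁ : w.start = α.rngF) (h₂ : w.start = β.rngF),
        x = .inr (α.concatInf w h₁) ∧ x = .inr (β.concatInf w h₂))) →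
    α.len = β.len

/-!
If `x ∈ F` has nontrivial isotropy, then `x` is an infinite path with a periodic tail `w`, which
repeats a closed path at some vertex `u` and so contains a loop at `u`. Condition (K) gives a second
loop at `u`; concatenating the two loops along the pattern of the squares yields an aperiodic path
`W`. Behind a long prefix `A` of `x`, the point `AW` has trivial isotropy, is close to `x`, and is a
limit of the points `AB₀⋯Bₖw`, which are tail equivalent to `x`; so `AW ∈ F`.

Conversely, if `μ` is the only loop at `v`, then `μμμ⋯` is the only point of its tail class that
starts at `v`. The closure of this class is invariant, because `αp ↦ βp` is continuous on `D_α`,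
and it meets the neighbourhood `D_μ` of `μμμ⋯` only in `μμμ⋯`, whose isotropy is nontrivial.
-/

variable {G}

theorem _root_.StrictMono.range_add_eq_inter_Ici {S : ℕ → ℕ} (hS : StrictMono S) (j : ℕ) :
    Set.range (fun i => S (j + i)) = Set.range S ∩ Set.Ici (S j) := by
  ext p
  constructor
  · rintro ⟨i, rfl⟩
    exact ⟨⟨j + i, rfl⟩, hS.monotone (Nat.le_add_right j i)⟩
  · rintro ⟨⟨k, rfl⟩, hk⟩
    exact ⟨k - j, show S (j + (k - j)) = S k by rw [Nat.add_sub_cancel' (hS.le_iff_le.1 hk)]⟩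

section EdgeLists

theorem valid_take {v : G.V} {l : List G.Ed} (n : ℕ) (h : Valid G v l) :
    Valid G v (l.take n) := by
  rw [← List.take_append_drop n l, valid_append] at h
  exact h.1

theorem src_getElem_zero {v : G.V} {l : List G.Ed} (hv : Valid G v l) (h : 0 < l.length) :
    G.src l[0] = v := by
  cases l with
  | nil => simp at h
  | cons e t => exact hv.1

theorem src_getElem_succ {v : G.V} {l : List G.Ed} (hv : Valid G v l) (i : ℕ)
    (h : i + 1 < l.length) : G.src l[i + 1] = G.rng l[i] := by
  induction l generalizing v i with
  | nil => simp at h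
  | cons e t ih =>
    cases i with
    | zero =>
      cases t with
      | nil => simp at h
      | cons e' t' => exact hv.2.1
    | succ j => simpa using ih hv.2 j (by simpa using h)

theorem rngTo_take_succ {v : G.V} {l : List G.Ed} (i : ℕ) (h : i < l.length) :
    rngTo G v (l.take (i + 1)) = G.rng l[i] := by
  induction l generalizing v i with
  | nil => simp at h
  | cons e t ih =>
    cases i with
    | zero => simp [rngTo]
    | succ j => simpa [rngTo] using ih (v := G.rng e) j (by simpa using h)

end EdgeLists

theorem FinPath.ext {α β : FinPath G} (h₁ : α.start = β.start) (h₂ : α.edges = β.edges) :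
    α = β := by
  cases α; cases β; simp_all

theorem appendInfAux_seq (l : List G.Ed) (v : G.V) (hv : Valid G v l) (z : InfPath G)
    (h : z.start = rngTo G v l) (i : ℕ) :
    (appendInfAux G l v hv z h).1.seq i =
      if hi : i < l.length then l[i] else z.seq (i - l.length) := by
  induction l generalizing v i with
  | nil => simp [appendInfAux]
  | cons e t ih =>
    cases i with
    | zero => simp [appendInfAux, consInf]
    | succ j =>
      simp only [appendInfAux, consInf]
      rw [ih (G.rng e) hv.2 h j]
      by_cases hj : j < t.length <;> simp [hj]

namespace FinPath

theorem concatInf_seq (α : FinPath G) (w : InfPath G) (h : w.start = α.rngF) (i : ℕ) :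
    (α.concatInf w h).seq i =
      if hi : i < α.edges.length then α.edges[i] else w.seq (i - α.edges.length) :=
  appendInfAux_seq α.edges α.start α.valid w h i

theorem concatInf_seq_add (α : FinPath G) (w : InfPath G) (h : w.start = α.rngF) (i : ℕ) :
    (α.concatInf w h).seq (α.edges.length + i) = w.seq i := by
  simp [concatInf_seq]

@[simp] theorem concatInf_start (α : FinPath G) (w : InfPath G) (h : w.start = α.rngF) :
    (α.concatInf w h).start = α.start :=
  (appendInfAux G α.edges α.start α.valid w h).2

end FinPath

namespace InfPath

@[ext] theorem ext {z w : InfPath G} (h : ∀ i, z.seq i = w.seq i) : z = w := by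
  cases z; cases w; simp only [InfPath.mk.injEq]; exact funext h

theorem src_seq (z : InfPath G) (n : ℕ) :
    G.src (z.seq n) = rngTo G z.start ((List.range n).map z.seq) := by
  induction n with
  | zero => rfl
  | succ m _ =>
    rw [z.valid m, List.range_succ, List.map_append, rngTo_append]
    rfl

theorem valid_range_map (z : InfPath G) (n : ℕ) :
    Valid G z.start ((List.range n).map z.seq) := by
  induction n with
  | zero => trivial
  | succ m ih =>
    rw [List.range_succ, List.map_append, valid_append, ← src_seq]
    exact ⟨ih, rfl, trivial⟩

def take (n : ℕ) (z : InfPath G) : FinPath G :=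
  ⟨z.start, (List.range n).map z.seq, z.valid_range_map n⟩

def drop (n : ℕ) (z : InfPath G) : InfPath G :=
  ⟨fun i => z.seq (n + i), fun i => z.valid (n + i)⟩

@[simp] theorem len_take (n : ℕ) (z : InfPath G) : (z.take n).len = n := by
  simp [take, FinPath.len]

@[simp] theorem length_take_edges (n : ℕ) (z : InfPath G) : (z.take n).edges.length = n := by
  simp [take]

@[simp] theorem getElem_take_edges (n : ℕ) (z : InfPath G) (i : ℕ)
    (h : i < (z.take n).edges.length) :
    (z.take n).edges[i] = z.seq i := by
  simp [take]

@[simp] theorem drop_seq (n : ℕ) (z : InfPath G) (i : ℕ) : (z.drop n).seq i = z.seq (n + i) := rfl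

theorem rngF_take (n : ℕ) (z : InfPath G) : (z.take n).rngF = (z.drop n).start :=
  (src_seq z n).symm

theorem drop_drop (m n : ℕ) (z : InfPath G) : (z.drop m).drop n = z.drop (m + n) := by
  ext i; simp [Nat.add_assoc]

@[simp] theorem drop_zero (z : InfPath G) : z.drop 0 = z := by
  ext i; simp

theorem drop_mul_eq_self {z : InfPath G} {d : ℕ} (h : z.drop d = z) (k : ℕ) :
    z.drop (k * d) = z := by
  induction k with
  | zero => simp
  | succ k ih => rw [Nat.succ_mul, ← drop_drop, ih, h]

theorem eq_of_take_eq_of_drop_eq {z z' : InfPath G} {n : ℕ} (h₁ : z.take n = z'.take n)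
    (h₂ : z.drop n = z'.drop n) : z = z' := by
  ext i
  by_cases hi : i < n
  · have := congrArg (fun α : FinPath G => α.edges[i]?) h₁
    simpa [take, hi] using this
  · simpa [show n + (i - n) = i by omega] using congrArg (fun w : InfPath G => w.seq (i - n)) h₂

theorem eq_take_concatInf_of_drop_eq {z w : InfPath G} {n : ℕ} (hw : z.drop n = w)
    (h : w.start = (z.take n).rngF) : z = (z.take n).concatInf w h := by
  subst hw
  ext i
  symm
  rw [FinPath.concatInf_seq]
  split_ifs with hi
  · simp
  · simp only [length_take_edges, drop_seq] at hi ⊢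
    congr 1
    omega

theorem drop_concatInf (α : FinPath G) (w : InfPath G) (h : w.start = α.rngF) :
    (α.concatInf w h).drop α.len = w := by
  ext i
  exact FinPath.concatInf_seq_add α w h i

end InfPath

namespace PathSp

def cat (α : FinPath G) : (p : PathSp G) → startOf G p = α.rngF → PathSp G
  | .inl β, h => .inl (α.concat β h)
  | .inr w, h => .inr (α.concatInf w h)

def drop (n : ℕ) : PathSp G → PathSp G
  | .inl φ => .inl ⟨rngTo G φ.start (φ.edges.take n), φ.edges.drop n, valid_drop G n φ.valid⟩
  | .inr z => .inr (z.drop n)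

@[simp] theorem startOf_cat (α : FinPath G) (p : PathSp G) (h : startOf G p = α.rngF) :
    startOf G (cat α p h) = α.start := by
  cases p with
  | inl β => rfl
  | inr w => exact FinPath.concatInf_start α w h

theorem nthEdge_cat (α : FinPath G) (p : PathSp G) (h : startOf G p = α.rngF) (i : ℕ) :
    nthEdge G (cat α p h) i = if i < α.len then α.edges[i]? else nthEdge G p (i - α.len) := by
  cases p with
  | inl β => exact List.getElem?_append
  | inr w =>
    refine (congrArg some (FinPath.concatInf_seq α w h i)).trans ?_
    simp only [FinPath.len]
    split_ifs with hi <;> simp [hi, nthEdge]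

theorem nthEdge_cat_add (α : FinPath G) (p : PathSp G) (h : startOf G p = α.rngF) (i : ℕ) :
    nthEdge G (cat α p h) (α.len + i) = nthEdge G p i := by
  simp [nthEdge_cat]

theorem nthEdge_drop (n : ℕ) (x : PathSp G) (i : ℕ) :
    nthEdge G (x.drop n) i = nthEdge G x (n + i) := by
  cases x with
  | inl φ => exact List.getElem?_drop
  | inr z => rfl

theorem ext {x y : PathSp G} (h₁ : startOf G x = startOf G y)
    (h₂ : ∀ i, nthEdge G x i = nthEdge G y i) : x = y := by
  cases x with
  | inl φ =>
    cases y with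
    | inl ψ => exact congrArg _ (FinPath.ext h₁ (List.ext_getElem? h₂))
    | inr w => simpa [nthEdge] using h₂ φ.edges.length
  | inr z =>
    cases y with
    | inl ψ => simpa [nthEdge] using h₂ ψ.edges.length
    | inr w => exact congrArg _ (InfPath.ext fun i => by simpa [nthEdge] using h₂ i)

theorem cat_injective {α : FinPath G} {p q : PathSp G} {hp : startOf G p = α.rngF}
    {hq : startOf G q = α.rngF} (h : cat α p hp = cat α q hq) : p = q :=
  ext (hp.trans hq.symm) fun i => by rw [← nthEdge_cat_add α p hp, h, nthEdge_cat_add]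

theorem drop_cat (α : FinPath G) (p : PathSp G) (h : startOf G p = α.rngF) :
    (cat α p h).drop α.len = p := by
  refine ext ?_ fun i => by rw [nthEdge_drop, nthEdge_cat_add]
  cases p with
  | inl β =>
    change rngTo G α.start ((α.edges ++ β.edges).take α.edges.length) = β.start
    rw [List.take_left]
    exact h.symm
  | inr w => exact congrArg InfPath.start (InfPath.drop_concatInf α w h)

theorem cat_cat (α β : FinPath G) (p : PathSp G) (h₁ : startOf G p = β.rngF)
    (h₂ : β.start = α.rngF) :
    cat α (cat β p h₁) (by rwa [startOf_cat]) =
      cat (α.concat β h₂) p (by rw [FinPath.rngF_concat]; exact h₁) := by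
  refine ext (by simp only [startOf_cat]; rfl) fun i => ?_
  have hlen : (α.concat β h₂).len = α.len + β.len := List.length_append
  simp only [nthEdge_cat, hlen]
  change _ = if i < α.len + β.len then (α.edges ++ β.edges)[i]? else _
  rw [List.getElem?_append]
  simp only [FinPath.len]
  by_cases hα : i < α.edges.length
  · simp [hα, show i < α.edges.length + β.edges.length by omega]
  by_cases hβ : i - α.edges.length < β.edges.length
  · simp [hα, hβ, show i < α.edges.length + β.edges.length by omega]
  · simp [hα, hβ, show ¬ i < α.edges.length + β.edges.length by omega, Nat.sub_sub]

end PathSp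

section Cylinders

open PathSp

theorem mem_Dset_iff_exists_cat {α : FinPath G} {x : PathSp G} :
    x ∈ Dset G α ↔ ∃ p h, x = cat α p h := by
  constructor
  · rintro (⟨β, h, rfl⟩ | ⟨w, h, rfl⟩)
    exacts [⟨.inl β, h, rfl⟩, ⟨.inr w, h, rfl⟩]
  · rintro ⟨(β | w), h, rfl⟩
    exacts [Or.inl ⟨β, h, rfl⟩, Or.inr ⟨w, h, rfl⟩]

theorem cat_mem_Dset (α : FinPath G) (p : PathSp G) (h : startOf G p = α.rngF) :
    cat α p h ∈ Dset G α :=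
  mem_Dset_iff_exists_cat.2 ⟨p, h, rfl⟩

theorem startOf_drop_of_prefix {α : FinPath G} {x : PathSp G} (h₁ : startOf G x = α.start)
    (h₂ : ∀ i < α.len, nthEdge G x i = α.edges[i]?) : startOf G (x.drop α.len) = α.rngF := by
  cases x with
  | inl φ =>
    change rngTo G φ.start (φ.edges.take α.len) = rngTo G α.start α.edges
    congr 1
    refine List.ext_getElem? fun i => ?_
    rw [List.getElem?_take]
    split_ifs with hi
    · exact h₂ i hi
    · exact (List.getElem?_eq_none (not_lt.1 hi)).symm
  | inr z =>
    change (z.drop α.len).start = α.rngF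
    rw [← InfPath.rngF_take]
    congr 1
    refine FinPath.ext h₁ (List.ext_getElem (by simp [FinPath.len]) fun i hi _ => ?_)
    simp only [InfPath.length_take_edges] at hi
    simpa [nthEdge, List.getElem?_eq_getElem (show i < α.edges.length from hi)] using h₂ i hi

theorem mem_Dset_iff {α : FinPath G} {x : PathSp G} :
    x ∈ Dset G α ↔ startOf G x = α.start ∧ ∀ i < α.len, nthEdge G x i = α.edges[i]? := by
  constructor
  · rw [mem_Dset_iff_exists_cat]
    rintro ⟨p, h, rfl⟩
    exact ⟨startOf_cat α p h, fun i hi => by simp [nthEdge_cat, hi]⟩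
  · rintro ⟨h₁, h₂⟩
    have hx : x = cat α (x.drop α.len) (startOf_drop_of_prefix h₁ h₂) := by
      refine PathSp.ext (by rw [startOf_cat, h₁]) fun i => ?_
      rw [nthEdge_cat]
      split_ifs with hi
      · exact h₂ i hi
      · rw [nthEdge_drop]
        congr 1
        omega
    exact hx ▸ cat_mem_Dset _ _ _

theorem inl_mem_Dset_self (α : FinPath G) : (.inl α : PathSp G) ∈ Dset G α :=
  mem_Dset_iff.2 ⟨rfl, fun _ _ => rfl⟩

theorem inl_not_mem_Dset_of_len_lt {φ δ : FinPath G} (h : φ.len < δ.len) :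
    (.inl φ : PathSp G) ∉ Dset G δ := fun hφ => by
  have := (mem_Dset_iff.1 hφ).2 φ.len h
  simp [nthEdge, FinPath.len,
    List.getElem?_eq_getElem (show φ.edges.length < δ.edges.length from h)] at this

theorem mem_Dset_trans {x : PathSp G} {β δ : FinPath G} (hx : x ∈ Dset G β)
    (hβ : (.inl β : PathSp G) ∈ Dset G δ) : x ∈ Dset G δ := by
  obtain ⟨p, hp, rfl⟩ := mem_Dset_iff_exists_cat.1 hx
  obtain ⟨ε, hε, hβε⟩ | ⟨_, _, h⟩ := hβ
  · cases hβε
    rw [← cat_cat δ ε p (by rwa [FinPath.rngF_concat] at hp) hε]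
    exact cat_mem_Dset _ _ _
  · cases h

theorem mem_Dset_comparable {x : PathSp G} {β δ : FinPath G} (hβ : x ∈ Dset G β)
    (hδ : x ∈ Dset G δ) : (.inl δ : PathSp G) ∈ Dset G β ∨ (.inl β : PathSp G) ∈ Dset G δ := by
  rw [mem_Dset_iff] at hβ hδ
  rcases le_total β.len δ.len with h | h
  · refine Or.inl (mem_Dset_iff.2 ⟨hδ.1.symm.trans hβ.1, fun i hi => ?_⟩)
    exact (hδ.2 i (by omega)).symm.trans (hβ.2 i hi)
  · refine Or.inr (mem_Dset_iff.2 ⟨hβ.1.symm.trans hδ.1, fun i hi => ?_⟩)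
    exact (hβ.2 i (by omega)).symm.trans (hδ.2 i hi)

theorem cat_mem_Dset_concat_iff {β δ : FinPath G} {p : PathSp G} (hp : startOf G p = β.rngF)
    (hδ : δ.start = β.rngF) : cat β p hp ∈ Dset G (β.concat δ hδ) ↔ p ∈ Dset G δ := by
  simp only [mem_Dset_iff_exists_cat]
  constructor
  · rintro ⟨q, hq, h⟩
    rw [← cat_cat (h₁ := by rwa [FinPath.rngF_concat] at hq)] at h
    exact ⟨q, _, cat_injective h⟩
  · rintro ⟨q, hq, rfl⟩
    exact ⟨q, by rw [FinPath.rngF_concat]; exact hq, cat_cat β δ q hq hδ⟩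

theorem mem_Dset_iff_of_mem_Dset {x y : PathSp G} {δ ε : FinPath G} (hx : x ∈ Dset G δ)
    (hy : y ∈ Dset G δ) (hε : ε.len ≤ δ.len) : x ∈ Dset G ε ↔ y ∈ Dset G ε := by
  rw [mem_Dset_iff] at hx hy
  simp only [mem_Dset_iff]
  refine and_congr ?_ (forall₂_congr fun i hi => ?_)
  · rw [hx.1, hy.1]
  · rw [hx.2 i (by omega), hy.2 i (by omega)]

theorem inr_mem_Dset_take (n : ℕ) (z : InfPath G) : (.inr z : PathSp G) ∈ Dset G (z.take n) :=
  mem_Dset_iff.2 ⟨rfl, fun i hi => by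
    simp only [InfPath.len_take] at hi
    simp [nthEdge, InfPath.take, hi]⟩

end Cylinders

section TailEquivalence

open PathSp

theorem tailEq_iff {x y : PathSp G} :
    TailEq G x y ↔ ∃ α β p h₁ h₂, x = cat α p h₁ ∧ y = cat β p h₂ := by
  constructor
  · rintro (⟨α, β, γ, h₁, h₂, rfl, rfl⟩ | ⟨α, β, w, h₁, h₂, rfl, rfl⟩)
    exacts [⟨α, β, .inl γ, h₁, h₂, rfl, rfl⟩, ⟨α, β, .inr w, h₁, h₂, rfl, rfl⟩]
  · rintro ⟨α, β, (γ | w), h₁, h₂, rfl, rfl⟩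
    exacts [Or.inl ⟨α, β, γ, h₁, h₂, rfl, rfl⟩, Or.inr ⟨α, β, w, h₁, h₂, rfl, rfl⟩]

theorem tailEq_inr_iff {z : InfPath G} {y : PathSp G} :
    TailEq G (.inr z) y ↔ ∃ z', y = .inr z' ∧ ∃ m n, z.drop m = z'.drop n := by
  constructor
  · rintro (⟨_, _, _, _, _, h, _⟩ | ⟨α, β, w, h₁, h₂, h, rfl⟩)
    · cases h
    · cases h
      exact ⟨_, rfl, α.len, β.len, by rw [InfPath.drop_concatInf, InfPath.drop_concatInf]⟩
  · rintro ⟨z', rfl, m, n, h⟩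
    have h₂ : (z.drop m).start = (z'.take n).rngF := by rw [h, InfPath.rngF_take]
    exact Or.inr ⟨z.take m, z'.take n, z.drop m, (InfPath.rngF_take m z).symm, h₂,
      congrArg _ (InfPath.eq_take_concatInf_of_drop_eq rfl _),
      congrArg _ (InfPath.eq_take_concatInf_of_drop_eq h.symm _)⟩

theorem invariantS_setOf_tailEq_inr (z : InfPath G) :
    InvariantS G {t | TailEq G (.inr z) t} := by
  intro x hx y hxy
  obtain ⟨z₁, rfl, m, n, h⟩ := tailEq_inr_iff.1 hx
  obtain ⟨z₂, rfl, k, l, h'⟩ := tailEq_inr_iff.1 hxy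
  refine tailEq_inr_iff.2 ⟨z₂, rfl, m + k, l + n, ?_⟩
  rw [← InfPath.drop_drop, h, InfPath.drop_drop, Nat.add_comm n k, ← InfPath.drop_drop, h',
    InfPath.drop_drop]

theorem memX_cat (α : FinPath G) (p : PathSp G) (h : startOf G p = α.rngF) :
    memX G (cat α p h) ↔ memX G p := by
  cases p with
  | inl β => exact iff_of_eq (congrArg (Vinf G) (FinPath.rngF_concat α β h))
  | inr w => exact Iff.rfl

theorem invariantS_Xset : InvariantS G (Xset G) := by
  intro x hx y hxy
  obtain ⟨α, β, p, h₁, h₂, rfl, rfl⟩ := tailEq_iff.1 hxy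
  exact (memX_cat β p h₂).2 ((memX_cat α p h₁).1 hx)

theorem InvariantS.inter {S T : Set (PathSp G)} (hS : InvariantS G S) (hT : InvariantS G T) :
    InvariantS G (S ∩ T) :=
  fun x hx y hxy => ⟨hS x hx.1 y hxy, hT x hx.2 y hxy⟩

def InfPath.Aperiodic (z : InfPath G) : Prop := ∀ m n, z.drop m = z.drop n → m = n

theorem InfPath.Aperiodic.concatInf {w : InfPath G} (hw : w.Aperiodic) (α : FinPath G)
    (h : w.start = α.rngF) : (α.concatInf w h).Aperiodic := fun m n hmn => by
  have := congrArg (InfPath.drop α.len) hmn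
  rw [InfPath.drop_drop, InfPath.drop_drop, Nat.add_comm m, Nat.add_comm n, ← InfPath.drop_drop,
    ← InfPath.drop_drop, InfPath.drop_concatInf] at this
  exact hw m n this

theorem trivIso_inl (φ : FinPath G) : TrivIso G (.inl φ) := by
  rintro α β (⟨γ, h₁, h₂, e₁, e₂⟩ | ⟨_, _, _, e, _⟩)
  · have := congrArg (fun x => (FinPath.edges x).length) (Sum.inl.inj (e₁.symm.trans e₂))
    simp only [FinPath.concat, List.length_append] at this
    exact Nat.add_right_cancel this
  · cases e

theorem trivIso_inr_iff {z : InfPath G} : TrivIso G (.inr z) ↔ z.Aperiodic := by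
  constructor
  · intro hz m n h
    have h₂ : (z.drop m).start = (z.take n).rngF := by rw [h, InfPath.rngF_take]
    simpa using hz (z.take m) (z.take n) (Or.inr ⟨z.drop m, (InfPath.rngF_take m z).symm, h₂,
      congrArg _ (InfPath.eq_take_concatInf_of_drop_eq rfl _),
      congrArg _ (InfPath.eq_take_concatInf_of_drop_eq h.symm _)⟩)
  · rintro hz α β (⟨_, _, _, e, _⟩ | ⟨w, h₁, h₂, e₁, e₂⟩)
    · cases e
    · cases e₁
      refine hz _ _ ?_
      rw [InfPath.drop_concatInf, Sum.inr.inj e₂, InfPath.drop_concatInf]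

end TailEquivalence

section Topology

open PathSp Filter

instance : TopologicalSpace (PathSp G) := pathTop G

theorem isOpen_Dset (α : FinPath G) : IsOpen (Dset G α) :=
  TopologicalSpace.GenerateOpen.basic _ (Or.inl ⟨α, rfl⟩)

theorem isClopen_Dset (α : FinPath G) : IsClopen (Dset G α) :=
  ⟨isOpen_compl_iff.1 (TopologicalSpace.GenerateOpen.basic _ (Or.inr ⟨α, rfl⟩)), isOpen_Dset α⟩

theorem Dset_take_subset {m n : ℕ} (z : InfPath G) (h : m ≤ n) :
    Dset G (z.take n) ⊆ Dset G (z.take m) := fun _ hy =>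
  (mem_Dset_iff_of_mem_Dset hy (inr_mem_Dset_take n z) (by simpa using h)).2
    (inr_mem_Dset_take m z)

theorem hasBasis_nhds_inr (z : InfPath G) :
    (@nhds (PathSp G) _ (.inr z)).HasBasis (fun _ => True) fun n => Dset G (z.take n) := by
  refine ⟨fun t => ⟨fun ht => ?_, fun ⟨n, _, hn⟩ =>
    mem_of_superset ((isOpen_Dset _).mem_nhds (inr_mem_Dset_take n z)) hn⟩⟩
  obtain ⟨U, hUt, hU, hzU⟩ := mem_nhds_iff.1 ht
  suffices ∃ n, Dset G (z.take n) ⊆ U from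
    let ⟨n, hn⟩ := this; ⟨n, trivial, hn.trans hUt⟩
  clear hUt ht
  induction hU with
  | basic s hs =>
    rcases hs with ⟨δ, rfl⟩ | ⟨δ, rfl⟩
    · exact ⟨δ.len, fun y hy =>
        (mem_Dset_iff_of_mem_Dset hy (inr_mem_Dset_take _ z) (by simp)).2 hzU⟩
    · exact ⟨δ.len, fun y hy hyδ =>
        hzU ((mem_Dset_iff_of_mem_Dset hy (inr_mem_Dset_take _ z) (by simp)).1 hyδ)⟩
  | univ => exact ⟨0, Set.subset_univ _⟩
  | inter s t _ _ ihs iht =>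
    obtain ⟨m, hm⟩ := ihs hzU.1
    obtain ⟨n, hn⟩ := iht hzU.2
    exact ⟨max m n, Set.subset_inter ((Dset_take_subset z (le_max_left m n)).trans hm)
      ((Dset_take_subset z (le_max_right m n)).trans hn)⟩
  | sUnion S _ ih =>
    obtain ⟨s, hs, hzs⟩ := hzU
    obtain ⟨n, hn⟩ := ih s hs hzs
    exact ⟨n, hn.trans (Set.subset_sUnion_of_mem hs)⟩

theorem eq_of_mem_closure_singleton_inr {x : PathSp G} {z : InfPath G}
    (hx : x ∈ closure ({.inr z} : Set (PathSp G))) : x = .inr z := by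
  cases x with
  | inl φ =>
    obtain ⟨_, ⟨-, hzφ⟩, rfl⟩ := mem_closure_iff.1 hx
      (Dset G φ ∩ (Dset G (z.take (φ.len + 1)))ᶜ)
      ((isOpen_Dset φ).inter (isClopen_Dset _).compl.isOpen)
      ⟨inl_mem_Dset_self φ, inl_not_mem_Dset_of_len_lt (by simp)⟩
    exact absurd (inr_mem_Dset_take _ z) hzφ
  | inr ζ =>
    refine congrArg _ (InfPath.ext fun i => ?_)
    obtain ⟨_, rfl, hz⟩ := (mem_closure_iff_nhds_basis (hasBasis_nhds_inr ζ)).1 hx (i + 1) trivial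
    have := (mem_Dset_iff.1 hz).2 i (by simp)
    simpa [nthEdge, InfPath.take] using this.symm

open Classical in
/-- The map `αp ↦ βp` on `D_α`; its values off `D_α` play no role. -/
noncomputable def rebase (α β : FinPath G) (x : PathSp G) : PathSp G :=
  if h : startOf G (x.drop α.len) = β.rngF then cat β (x.drop α.len) h else x

variable {α β : FinPath G}

theorem rebase_cat (hαβ : α.rngF = β.rngF) (p : PathSp G) (h : startOf G p = α.rngF) :
    rebase α β (cat α p h) = cat β p (h.trans hαβ) := by
  rw [rebase, dif_pos (by rw [drop_cat]; exact h.trans hαβ)]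
  congr 1
  exact drop_cat α p h

theorem exists_isClopen_rebase_mem_Dset_iff (hαβ : α.rngF = β.rngF) (δ : FinPath G) :
    ∃ u, IsClopen u ∧ ∀ x ∈ Dset G α, rebase α β x ∈ Dset G δ ↔ x ∈ u := by
  by_cases hβδ : (.inl β : PathSp G) ∈ Dset G δ
  · refine ⟨Set.univ, isClopen_univ, fun x hx => iff_of_true ?_ trivial⟩
    obtain ⟨p, h, rfl⟩ := mem_Dset_iff_exists_cat.1 hx
    rw [rebase_cat hαβ]
    exact mem_Dset_trans (cat_mem_Dset _ _ _) hβδ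
  by_cases hδβ : (.inl δ : PathSp G) ∈ Dset G β
  · obtain ⟨ε, hε, hδ⟩ | ⟨_, _, h⟩ := hδβ
    · cases hδ
      refine ⟨Dset G (α.concat ε (hε.trans hαβ.symm)), isClopen_Dset _, fun x hx => ?_⟩
      obtain ⟨p, h, rfl⟩ := mem_Dset_iff_exists_cat.1 hx
      rw [rebase_cat hαβ, cat_mem_Dset_concat_iff, cat_mem_Dset_concat_iff]
    · cases h
  · refine ⟨∅, isClopen_empty, fun x hx => iff_of_false (fun h => ?_) id⟩
    obtain ⟨p, hp, rfl⟩ := mem_Dset_iff_exists_cat.1 hx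
    rw [rebase_cat hαβ] at h
    exact (mem_Dset_comparable (cat_mem_Dset _ _ _) h).elim hδβ hβδ

theorem continuousOn_rebase (hαβ : α.rngF = β.rngF) :
    ContinuousOn (rebase α β) (Dset G α) := by
  rw [continuousOn_iff_continuous_domRestrict]
  refine continuous_generateFrom_iff.2 ?_
  rintro _ (⟨δ, rfl⟩ | ⟨δ, rfl⟩) <;> obtain ⟨u, hu, hδ⟩ := exists_isClopen_rebase_mem_Dset_iff hαβ δ
  · rw [show (Dset G α).domRestrict (rebase α β) ⁻¹' Dset G δ = Subtype.val ⁻¹' u from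
      Set.ext fun x => hδ x.1 x.2]
    exact hu.isOpen.preimage continuous_subtype_val
  · rw [show (Dset G α).domRestrict (rebase α β) ⁻¹' (Dset G δ)ᶜ = Subtype.val ⁻¹' uᶜ from
      Set.ext fun x => not_congr (hδ x.1 x.2)]
    exact hu.compl.isOpen.preimage continuous_subtype_val

/-- `αp ↦ βp` is continuous on the open set `D_α` and maps `D_α ∩ S` into `S`. -/
theorem InvariantS.closure {S : Set (PathSp G)} (hS : InvariantS G S) :
    InvariantS G (closure S) := by
  intro x hx y hxy
  obtain ⟨α, β, p, h₁, h₂, rfl, rfl⟩ := tailEq_iff.1 hxy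
  have hαβ : α.rngF = β.rngF := h₁.symm.trans h₂
  have hmaps : Set.MapsTo (rebase α β) (Dset G α ∩ S) S := by
    rintro _ ⟨hqα, hqS⟩
    obtain ⟨q, hq, rfl⟩ := mem_Dset_iff_exists_cat.1 hqα
    rw [rebase_cat hαβ]
    exact hS _ hqS _ (tailEq_iff.2 ⟨α, β, q, hq, _, rfl, rfl⟩)
  rw [← rebase_cat hαβ]
  exact ((continuousOn_rebase hαβ _ (cat_mem_Dset α p h₁)).mono Set.inter_subset_left).mem_closure
    ((isOpen_Dset α).inter_closure ⟨cat_mem_Dset α p h₁, hx⟩) hmaps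

end Topology

section Loops

theorem LoopAt.len_pos {v : G.V} {μ : FinPath G} (hμ : LoopAt G v μ) : 0 < μ.len :=
  List.length_pos_iff.2 hμ.1

/-- Cut the closed path at its first return to `v`. -/
theorem exists_loopAt_take {v : G.V} {l : List G.Ed} (hv : Valid G v l)
    (hr : rngTo G v l = v) (hne : l ≠ []) :
    ∃ k ≤ l.length, LoopAt G v ⟨v, l.take k, valid_take k hv⟩ := by
  classical
  have hex : ∃ k, 0 < k ∧ k ≤ l.length ∧ rngTo G v (l.take k) = v :=
    ⟨l.length, List.length_pos_iff.2 hne, le_rfl, by rwa [List.take_length]⟩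
  obtain ⟨hk₀, hkl, hkv⟩ := Nat.find_spec hex
  refine ⟨Nat.find hex, hkl, ?_, rfl, hkv, fun i e hi he => ?_⟩
  · simp only [ne_eq, List.take_eq_nil_iff, not_or]
    exact ⟨hk₀.ne', hne⟩
  · simp only [List.length_take] at hi
    have hil : i < l.length := by omega
    have hei : l[i] = e := by
      rw [List.getElem?_take, if_pos (by omega), List.getElem?_eq_getElem hil] at he
      exact Option.some.inj he
    intro hev
    refine Nat.find_min hex (m := i + 1) (by omega) ⟨by omega, by omega, ?_⟩
    rw [rngTo_take_succ i hil, hei, hev]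

end Loops

section LoopConcatenation

variable (B : ℕ → FinPath G)

def concatEdges : ℕ → List G.Ed
  | 0 => []
  | n + 1 => concatEdges n ++ (B n).edges

variable {B}

theorem length_concatEdges_succ (n : ℕ) :
    (concatEdges B (n + 1)).length = (concatEdges B n).length + (B n).len :=
  List.length_append

theorem concatEdges_prefix {m n : ℕ} (h : m ≤ n) : concatEdges B m <+: concatEdges B n := by
  induction n, h using Nat.le_induction with
  | base => exact List.prefix_refl _
  | succ n _ ih => exact ih.trans (List.prefix_append _ _)

variable {u : G.V} (hB : ∀ j, LoopAt G u (B j))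
include hB

theorem valid_concatEdges (n : ℕ) :
    Valid G u (concatEdges B n) ∧ rngTo G u (concatEdges B n) = u := by
  induction n with
  | zero => exact ⟨trivial, rfl⟩
  | succ n ih =>
    obtain ⟨_, hs, hr, _⟩ := hB n
    refine ⟨(valid_append G _ _ _).2 ⟨ih.1, ?_⟩, ?_⟩
    · rw [ih.2, ← hs]; exact (B n).valid
    · rw [concatEdges, rngTo_append, ih.2, ← hs]; exact hr.trans hs.symm

theorem strictMono_length_concatEdges : StrictMono fun n => (concatEdges B n).length :=
  strictMono_nat_of_lt_succ fun n => by
    rw [length_concatEdges_succ]; have := (hB n).len_pos; omega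

theorem le_length_concatEdges (n : ℕ) : n ≤ (concatEdges B n).length :=
  (strictMono_length_concatEdges hB).id_le n

/-- The infinite path `B 0 B 1 B 2 ⋯`. -/
def loopsPath : InfPath G where
  seq i := (concatEdges B (i + 1))[i]'(le_length_concatEdges hB (i + 1))
  valid i := by
    have h := le_length_concatEdges hB (i + 2)
    rw [(concatEdges_prefix (Nat.le_succ (i + 1))).getElem]
    exact src_getElem_succ (valid_concatEdges hB (i + 2)).1 i h

theorem loopsPath_seq_of_lt {i n : ℕ} (hi : i < (concatEdges B n).length) :
    (loopsPath hB).seq i = (concatEdges B n)[i] := by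
  rcases le_total (i + 1) n with h | h
  · exact (concatEdges_prefix h).getElem _
  · exact ((concatEdges_prefix h).getElem hi).symm

theorem loopsPath_seq_length_add (j : ℕ) {r : ℕ} (hr : r < (B j).len) :
    (loopsPath hB).seq ((concatEdges B j).length + r) = (B j).edges[r] := by
  rw [loopsPath_seq_of_lt hB (i := (concatEdges B j).length + r) (n := j + 1)
    (by rw [length_concatEdges_succ]; omega)]
  simp only [concatEdges, le_add_iff_nonneg_right, zero_le, List.getElem_append_right,
    add_tsub_cancel_left]
  rfl

theorem loopsPath_start : (loopsPath hB).start = u := by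
  have h := loopsPath_seq_length_add hB 0 (hB 0).len_pos
  simp only [concatEdges, List.length_nil, Nat.zero_add] at h
  rw [InfPath.start, h]
  exact (src_getElem_zero (B 0).valid _).trans (hB 0).2.1

theorem edges_take_loopsPath (n : ℕ) :
    ((loopsPath hB).take (concatEdges B n).length).edges = concatEdges B n :=
  List.ext_getElem (by simp) fun i _ h => by
    rw [InfPath.getElem_take_edges]
    exact loopsPath_seq_of_lt hB h

theorem inr_loopsPath_mem_Dset : (.inr (loopsPath hB) : PathSp G) ∈ Dset G (B 0) := by
  refine mem_Dset_iff.2 ⟨(loopsPath_start hB).trans (hB 0).2.1.symm, fun i hi => ?_⟩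
  have := loopsPath_seq_length_add hB 0 hi
  simp only [concatEdges, List.length_nil, Nat.zero_add] at this
  simp only [nthEdge, List.getElem?_eq_getElem (show i < (B 0).edges.length from hi)]
  exact congrArg some this

theorem exists_length_concatEdges_le_lt (p : ℕ) :
    ∃ j, (concatEdges B j).length ≤ p ∧ p < (concatEdges B (j + 1)).length := by
  induction p with
  | zero => exact ⟨0, le_rfl, strictMono_length_concatEdges hB (Nat.lt_succ_self 0)⟩
  | succ p ih =>
    obtain ⟨j, hj, hj'⟩ := ih
    rcases (Nat.succ_le_of_lt hj').lt_or_eq with h | h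
    · exact ⟨j, by omega, h⟩
    · exact ⟨j + 1, h.ge, h.trans_lt (strictMono_length_concatEdges hB (Nat.lt_succ_self _))⟩

/-- No loop passes through `u` in its interior. -/
theorem src_loopsPath_seq_eq_iff (p : ℕ) :
    G.src ((loopsPath hB).seq p) = u ↔ p ∈ Set.range fun n => (concatEdges B n).length := by
  constructor
  · intro hp
    obtain ⟨j, hj, hj'⟩ := exists_length_concatEdges_le_lt hB p
    obtain ⟨r, rfl⟩ := Nat.exists_eq_add_of_le hj
    rcases r with _ | r
    · exact ⟨j, rfl⟩
    · rw [length_concatEdges_succ] at hj'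
      rw [← Nat.add_assoc, (loopsPath hB).valid, loopsPath_seq_length_add hB j (by omega)] at hp
      exact ((hB j).2.2.2 r _ (by simp only [FinPath.len] at hj'; omega)
        (List.getElem?_eq_getElem _) hp).elim
  · rintro ⟨j, rfl⟩
    have h := loopsPath_seq_length_add hB j (hB j).len_pos
    rw [Nat.add_zero] at h
    rw [h]
    exact (src_getElem_zero (B j).valid _).trans (hB j).2.1

theorem loopsPath_seq_add_of_drop_eq {m d : ℕ}
    (h : (loopsPath hB).drop m = (loopsPath hB).drop (m + d)) {p : ℕ} (hp : m ≤ p) :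
    (loopsPath hB).seq (p + d) = (loopsPath hB).seq p := by
  have := congrArg (fun z => InfPath.seq z (p - m)) h
  simp only [InfPath.drop_seq] at this
  rw [show m + (p - m) = p by omega, show m + d + (p - m) = p + d by omega] at this
  exact this.symm

/-- The junctions are the visits to `u`, and a period of a tail preserves visits. -/
theorem exists_length_concatEdges_add_eq {m d : ℕ}
    (h : (loopsPath hB).drop m = (loopsPath hB).drop (m + d)) :
    ∃ j, ∀ i, (concatEdges B (j + i)).length = (concatEdges B (m + i)).length + d := by
  set S := fun k => (concatEdges B k).length with hSdef
  have hS : StrictMono S := strictMono_length_concatEdges hB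
  have hm : ∀ k, m ≤ S (m + k) := fun k =>
    (le_length_concatEdges hB m).trans (hS.monotone (Nat.le_add_right m k))
  have hvis : ∀ p, m ≤ p → (p ∈ Set.range S ↔ p + d ∈ Set.range S) := fun p hp => by
    rw [← src_loopsPath_seq_eq_iff hB, ← src_loopsPath_seq_eq_iff hB,
      loopsPath_seq_add_of_drop_eq hB h hp]
  obtain ⟨j, hj⟩ := (hvis (S m) (by simpa using hm 0)).1 ⟨m, rfl⟩
  have hmono : ∀ k, StrictMono fun i => S (k + i) := fun k a b hab =>
    hS (Nat.add_lt_add_left hab k)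
  refine ⟨j, congrFun (((hmono j).range_inj fun a b hab =>
    Nat.add_lt_add_right (hmono m hab) _).1 ?_)⟩
  rw [hS.range_add_eq_inter_Ici]
  ext p
  constructor
  · rintro ⟨hp, hjp⟩
    rw [Set.mem_Ici, hj] at hjp
    have hm₀ : m ≤ S m := by simpa using hm 0
    have hqS : p - d ∈ Set.range S := (hvis _ (by omega)).2 (by rwa [Nat.sub_add_cancel (by omega)])
    have : p - d ∈ Set.range fun i => S (m + i) := by
      rw [hS.range_add_eq_inter_Ici]
      exact ⟨hqS, by rw [Set.mem_Ici]; omega⟩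
    obtain ⟨i, hi⟩ := this
    exact ⟨i, by simp only at hi ⊢; omega⟩
  · rintro ⟨i, rfl⟩
    refine ⟨(hvis _ (hm i)).1 ⟨m + i, rfl⟩, ?_⟩
    simp only [Set.mem_Ici, hj]
    exact Nat.add_le_add_right (hS.monotone (Nat.le_add_right m i)) _

theorem eq_of_length_concatEdges_add_eq {m d j : ℕ}
    (h : (loopsPath hB).drop m = (loopsPath hB).drop (m + d))
    (hj : ∀ i, (concatEdges B (j + i)).length = (concatEdges B (m + i)).length + d) (i : ℕ) :
    B (j + i) = B (m + i) := by
  have h₀ := hj i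
  have h₁ := hj (i + 1)
  simp only [← Nat.add_assoc, length_concatEdges_succ] at h₁
  refine FinPath.ext ((hB _).2.1.trans (hB _).2.1.symm)
    (List.ext_getElem (by simp only [FinPath.len] at h₁; omega) fun r h₂ h₃ => ?_)
  have hm := (le_length_concatEdges hB m).trans
    ((strictMono_length_concatEdges hB).monotone (Nat.le_add_right m i))
  rw [← loopsPath_seq_length_add hB _ h₂, ← loopsPath_seq_length_add hB _ h₃, h₀,
    Nat.add_right_comm, loopsPath_seq_add_of_drop_eq hB h (by omega)]

/-- A period would shift junctions to junctions, hence blocks to equal blocks. -/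
theorem aperiodic_loopsPath (hap : ∀ j j', (∀ i, B (j + i) = B (j' + i)) → j = j') :
    (loopsPath hB).Aperiodic := by
  suffices ∀ m d, (loopsPath hB).drop m = (loopsPath hB).drop (m + d) → d = 0 by
    intro m n h
    rcases le_total m n with hmn | hnm
    · have := this m (n - m) (by rwa [Nat.add_sub_cancel' hmn]); omega
    · have := this n (m - n) (by rwa [Nat.add_sub_cancel' hnm, eq_comm]); omega
  intro m d h
  obtain ⟨j, hj⟩ := exists_length_concatEdges_add_eq hB h
  obtain rfl := hap j m (eq_of_length_concatEdges_add_eq hB h hj)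
  simpa using hj 0

end LoopConcatenation

section UniqueLoop

variable {v : G.V} {μ : FinPath G}

theorem concatEdges_const_succ (μ : FinPath G) (n : ℕ) :
    concatEdges (fun _ => μ) (n + 1) = μ.edges ++ concatEdges (fun _ => μ) n := by
  induction n with
  | zero => simp [concatEdges]
  | succ n ih =>
    change concatEdges _ (n + 1) ++ μ.edges = μ.edges ++ (concatEdges _ n ++ μ.edges)
    rw [ih, List.append_assoc]

theorem length_concatEdges_const (μ : FinPath G) (n : ℕ) :
    (concatEdges (fun _ => μ) n).length = n * μ.len := by
  induction n with
  | zero => simp [concatEdges]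
  | succ n ih => rw [length_concatEdges_succ, ih, Nat.succ_mul]

theorem exists_eq_concatEdges_const (huniq : ∀ α, LoopAt G v α → α = μ) {l : List G.Ed}
    (hv : Valid G v l) (hr : rngTo G v l = v) : ∃ k, l = concatEdges (fun _ => μ) k := by
  induction hl : l.length using Nat.strong_induction_on generalizing l with
  | _ n ih =>
    by_cases hne : l = []
    · exact ⟨0, hne⟩
    obtain ⟨k, -, hloop⟩ := exists_loopAt_take hv hr hne
    have htake : l.take k = μ.edges := congrArg FinPath.edges (huniq _ hloop)
    have hk : 0 < k := by
      have := hloop.1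
      simp only [ne_eq, List.take_eq_nil_iff, not_or] at this
      omega
    have hret : rngTo G v (l.take k) = v := hloop.2.2.1
    have hvd : Valid G v (l.drop k) := hret ▸ valid_drop G k hv
    have hrd : rngTo G v (l.drop k) = v := by
      rwa [← List.take_append_drop k l, rngTo_append, hret] at hr
    have := List.length_pos_iff.2 hne
    obtain ⟨j, hj⟩ := ih _ (by rw [List.length_drop]; omega) hvd hrd rfl
    exact ⟨j + 1, by rw [concatEdges_const_succ, ← htake, ← hj, List.take_append_drop]⟩

variable (hμ : LoopAt G v μ)
include hμ

theorem drop_loopsPath_const : (loopsPath fun _ : ℕ => hμ).drop μ.len = loopsPath fun _ => hμ := by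
  ext i
  have hi : i < (concatEdges (fun _ => μ) (i + 1)).length :=
    le_length_concatEdges (fun _ => hμ) (i + 1)
  rw [InfPath.drop_seq, loopsPath_seq_of_lt _ hi, loopsPath_seq_of_lt (n := i + 2) _
    (by rw [concatEdges_const_succ, List.length_append]; exact Nat.add_lt_add_left hi _)]
  simp only [concatEdges_const_succ μ (i + 1)]
  rw [List.getElem_append_right (by simp [FinPath.len])]
  simp [FinPath.len]

theorem eq_loopsPath_const_of_drop_eq (huniq : ∀ α, LoopAt G v α → α = μ) {ζ : InfPath G}
    (hζ : ζ.start = v) {a b : ℕ} (h : ζ.drop a = (loopsPath fun _ : ℕ => hμ).drop b) :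
    ζ = loopsPath fun _ => hμ := by
  set x := loopsPath fun _ : ℕ => hμ
  have hper := InfPath.drop_mul_eq_self (drop_loopsPath_const hμ)
  set c := a + (b * μ.len - b)
  have hc : ζ.drop c = x := by
    rw [← InfPath.drop_drop, h, InfPath.drop_drop,
      Nat.add_sub_cancel' (Nat.le_mul_of_pos_right b hμ.len_pos), hper]
  have hx : x.start = v := loopsPath_start _
  obtain ⟨k, hk⟩ := exists_eq_concatEdges_const huniq (l := (ζ.take c).edges)
    (hζ ▸ (ζ.take c).valid) (by rw [← hζ]; exact (InfPath.rngF_take c ζ).trans (by rw [hc, hx, hζ]))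
  have hck : c = (concatEdges (fun _ => μ) k).length := by
    rw [← hk, InfPath.length_take_edges]
  refine InfPath.eq_of_take_eq_of_drop_eq (n := c) (FinPath.ext (hζ.trans hx.symm) ?_) ?_
  · rw [hk, hck, edges_take_loopsPath]
  · rw [hc, hck, length_concatEdges_const, hper]

end UniqueLoop

theorem eq_of_forall_isSquare_add_iff {j j' : ℕ} (h : ∀ i, IsSquare (j + i) ↔ IsSquare (j' + i)) :
    j = j' := by
  wlog hlt : j < j' generalizing j j'
  · rcases (not_lt.1 hlt).lt_or_eq with hlt' | heq
    · exact (this (fun i => (h i).symm) hlt').symm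
    · exact heq.symm
  have hsq : IsSquare (j + (j' * j' - j)) := ⟨j', by have := Nat.le_mul_self j'; omega⟩
  obtain ⟨r, hr⟩ := (h _).1 hsq
  refine absurd ⟨r, hr.symm⟩ (Nat.not_exists_sq (m := j') ?_ ?_)
  · have := Nat.le_mul_self j'; omega
  · have := Nat.le_mul_self j'; rw [Nat.add_mul, Nat.mul_add]; omega

/-- Condition (K) supplies a second loop at `u`; arranging the two loops along the squares
gives an aperiodic concatenation. -/
theorem exists_aperiodic_loopsPath (hK : CondK G) {u : G.V} {ℓ : FinPath G} (hℓ : LoopAt G u ℓ) :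
    ∃ (B : ℕ → FinPath G) (hB : ∀ j, LoopAt G u (B j)), (loopsPath hB).Aperiodic := by
  classical
  obtain ⟨ℓ', hℓ', hne⟩ : ∃ ℓ', LoopAt G u ℓ' ∧ ℓ' ≠ ℓ := by
    by_contra! h
    exact hK ⟨u, ℓ, hℓ, h⟩
  let B : ℕ → FinPath G := fun j => if IsSquare j then ℓ' else ℓ
  have hB : ∀ j, LoopAt G u (B j) := fun j => by
    dsimp only [B]
    split_ifs <;> assumption
  refine ⟨B, hB, aperiodic_loopsPath hB fun j j' h => eq_of_forall_isSquare_add_iff fun i => ?_⟩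
  have := h i
  dsimp only [B] at this
  split_ifs at this <;> simp_all

theorem exists_drop_eq_of_not_aperiodic {z : InfPath G} (hz : ¬ z.Aperiodic) :
    ∃ (w : InfPath G) (d : ℕ), 0 < d ∧ w.drop d = w ∧ ∀ N, ∃ a, N ≤ a ∧ z.drop a = w := by
  simp only [InfPath.Aperiodic, not_forall] at hz
  obtain ⟨m, n, h, hne⟩ := hz
  wlog hlt : m < n generalizing m n
  · exact this n m h.symm (Ne.symm hne) (by omega)
  have hper : (z.drop m).drop (n - m) = z.drop m := by
    rw [InfPath.drop_drop, Nat.add_sub_cancel' hlt.le, h]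
  refine ⟨z.drop m, n - m, by omega, hper, fun N => ⟨m + N * (n - m), ?_, ?_⟩⟩
  · have := Nat.le_mul_of_pos_right N (by omega : 0 < n - m)
    omega
  · rw [← InfPath.drop_drop, InfPath.drop_mul_eq_self hper]

theorem exists_loopAt_of_drop_eq {w : InfPath G} {d : ℕ} (hd : 0 < d) (hw : w.drop d = w) :
    ∃ ℓ, LoopAt G w.start ℓ := by
  obtain ⟨k, -, hℓ⟩ := exists_loopAt_take (w.take d).valid
    ((InfPath.rngF_take d w).trans (by rw [hw]; rfl))
    (List.ne_nil_of_length_pos (by simpa using hd))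
  exact ⟨_, hℓ⟩

/-- `A B 0 B 1 ⋯` is the limit of the paths `A B 0 ⋯ B (k - 1) w`, all tail equivalent to
`A w`. -/
theorem inr_concatInf_loopsPath_mem_closure {B : ℕ → FinPath G} (A : FinPath G) (w : InfPath G)
    (hw : w.start = A.rngF) (hB : ∀ j, LoopAt G A.rngF (B j)) :
    (.inr (A.concatInf (loopsPath hB) (loopsPath_start hB)) : PathSp G) ∈
      closure {t | TailEq G (.inr (A.concatInf w hw)) t} := by
  refine (mem_closure_iff_nhds_basis (hasBasis_nhds_inr _)).2 fun k _ => ?_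
  set P := (loopsPath hB).take (concatEdges B k).length
  have hP : P.start = A.rngF := loopsPath_start hB
  have hPw : w.start = (A.concat P hP).rngF := by
    rw [FinPath.rngF_concat, InfPath.rngF_take, hw]
    exact ((src_loopsPath_seq_eq_iff hB _).2 ⟨k, rfl⟩).symm
  refine ⟨.inr ((A.concat P hP).concatInf w hPw),
    tailEq_inr_iff.2 ⟨_, rfl, A.len, (A.concat P hP).len, by rw [InfPath.drop_concatInf,
      InfPath.drop_concatInf]⟩, ?_⟩
  have hY : (.inr (A.concatInf (loopsPath hB) (loopsPath_start hB)) : PathSp G) ∈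
      Dset G (A.concat P hP) :=
    (cat_mem_Dset_concat_iff (p := .inr (loopsPath hB)) (loopsPath_start hB) hP).2
      (inr_mem_Dset_take _ _)
  refine (mem_Dset_iff_of_mem_Dset (cat_mem_Dset _ (.inr w) hPw) hY ?_).2
    (inr_mem_Dset_take k _)
  have := le_length_concatEdges hB k
  simp only [FinPath.len, FinPath.concat, List.length_append] at this ⊢
  simp only [P, InfPath.length_take_edges]
  omega

theorem mem_closure_setOf_trivIso (hK : CondK G) {F : Set (PathSp G)}
    (hFC : ∃ C, IsClosed C ∧ F = C ∩ Xset G) (hF : InvariantS G F) {x : PathSp G} (hx : x ∈ F) :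
    x ∈ closure {x | x ∈ F ∧ TrivIso G x} := by
  by_cases hxi : TrivIso G x
  · exact subset_closure ⟨hx, hxi⟩
  obtain ⟨C, hC, rfl⟩ := hFC
  cases x with
  | inl φ => exact absurd (trivIso_inl φ) hxi
  | inr z =>
    obtain ⟨w, d, hd, hw, hzw⟩ := exists_drop_eq_of_not_aperiodic (mt trivIso_inr_iff.2 hxi)
    obtain ⟨ℓ, hℓ⟩ := exists_loopAt_of_drop_eq hd hw
    refine (mem_closure_iff_nhds_basis (hasBasis_nhds_inr z)).2 fun n _ => ?_
    obtain ⟨a, hna, ha⟩ := hzw n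
    have hwA : w.start = (z.take a).rngF := by rw [InfPath.rngF_take, ha]
    obtain ⟨B, hB, hap⟩ := exists_aperiodic_loopsPath hK (hwA ▸ hℓ)
    have hz := InfPath.eq_take_concatInf_of_drop_eq ha hwA
    have hTC : {t | TailEq G (.inr ((z.take a).concatInf w hwA)) t} ⊆ C := fun t ht =>
      (hF _ hx t (by rwa [← hz] at ht)).1
    refine ⟨_, ⟨⟨closure_minimal hTC hC (inr_concatInf_loopsPath_mem_closure _ w hwA hB), trivial⟩,
      trivIso_inr_iff.2 (hap.concatInf _ _)⟩,
      Dset_take_subset z hna (cat_mem_Dset _ (.inr (loopsPath hB)) _)⟩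

theorem condK_of_forall_dense
    (h : ∀ F : Set (PathSp G), F ⊆ Xset G → (∃ C, IsClosed C ∧ F = C ∩ Xset G) →
      InvariantS G F → F ⊆ closure {x | x ∈ F ∧ TrivIso G x}) :
    CondK G := by
  rintro ⟨v, μ, hμ, huniq⟩
  set x := loopsPath fun _ : ℕ => hμ
  set T := {t | TailEq G (.inr x) t}
  have hxT : (.inr x : PathSp G) ∈ T := tailEq_inr_iff.2 ⟨x, rfl, 0, 0, rfl⟩
  have hxμ : (.inr x : PathSp G) ∈ Dset G μ := inr_loopsPath_mem_Dset fun _ => hμ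
  have hdense := h (closure T ∩ Xset G) Set.inter_subset_right ⟨closure T, isClosed_closure, rfl⟩
    ((invariantS_setOf_tailEq_inr x).closure.inter invariantS_Xset) ⟨subset_closure hxT, trivial⟩
  obtain ⟨y, hyμ, ⟨hyT, -⟩, hy⟩ := mem_closure_iff.1 hdense (Dset G μ) (isOpen_Dset μ) hxμ
  have hTμ : Dset G μ ∩ T ⊆ {.inr x} := by
    rintro t ⟨htμ, htT⟩
    obtain ⟨ζ, rfl, m, n, hmn⟩ := tailEq_inr_iff.1 htT
    rw [eq_loopsPath_const_of_drop_eq hμ huniq ((mem_Dset_iff.1 htμ).1.trans hμ.2.1) hmn.symm]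
    rfl
  obtain rfl := eq_of_mem_closure_singleton_inr
    (closure_mono hTμ ((isOpen_Dset μ).inter_closure ⟨hyμ, hyT⟩))
  exact hμ.len_pos.ne
    (trivIso_inr_iff.1 hy 0 μ.len (by rw [InfPath.drop_zero, drop_loopsPath_const]))

theorem condK_iff_essentially_principal_general (G : Graph) :
    CondK G ↔
      ∀ F : Set (PathSp G), F ⊆ Xset G →
        (∃ C : Set (PathSp G), @IsClosed (PathSp G) (pathTop G) C ∧ F = C ∩ Xset G) →
        InvariantS G F →
        F ⊆ @closure (PathSp G) (pathTop G) {x | x ∈ F ∧ TrivIso G x} :=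
  ⟨fun hK _ _ hFC hF _ hx => mem_closure_setOf_trivIso hK hFC hF hx, condK_of_forall_dense⟩

/-- `E` satisfies condition (K) (no vertex has exactly one loop based
at it) iff for every subset `F` of `X` that is closed in the subspace topology of `X`
and invariant under tail equivalence, the set of points of `F` with trivial isotropy is
dense in `F`. -/
theorem condK_iff_essentially_principal (G : Graph) [Countable G.V] [Countable G.Ed]
    (hns : ∀ v : G.V, ∃ e : G.Ed, G.src e = v) :
    CondK G ↔
      ∀ F : Set (PathSp G), F ⊆ Xset G →
        (∃ C : Set (PathSp G), @IsClosed (PathSp G) (pathTop G) C ∧ F = C ∩ Xset G) →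
        InvariantS G F →
        F ⊆ @closure (PathSp G) (pathTop G) {x | x ∈ F ∧ TrivIso G x} :=
  condK_iff_essentially_principal_general G

end GraphCstar
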